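/- K_a(ℓᵖ) = 2^{1/p} for 1 < p < ∞, and K_a(c₀) = K_a(ℓ¹) = 2. -/

import Mathlib

open Set Filter

noncomputable section

/-- `S` is a `(c₁, c₂, d)`-bounded and separated antipodal subset of `X`. -/
def IsBSA (X : Type*) [NormedAddCommGroup X] [NormedSpace ℝ X] (S : Set X)
    (c₁ c₂ d : ℝ) : Prop :=
  (∀ x ∈ S, ‖x‖ ≤ c₁) ∧
  ∀ x ∈ S, ∀ y ∈ S, x ≠ y → ∃ f : X →L[ℝ] ℝ, ‖f‖ ≤ c₂ ∧ d ≤ f y - f x ∧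
    ∀ z ∈ S, f x ≤ f z ∧ f z ≤ f y

/-- The antipodal Kottman constant `K_a(X)`. -/
def Ka (X : Type*) [NormedAddCommGroup X] [NormedSpace ℝ X] : ℝ :=
  sSup {d : ℝ | ∃ S : Set X, S.Infinite ∧ IsBSA X S 1 1 d}

/-- The Kottman (separation) constant `K(X)`. -/
def Kc (X : Type*) [NormedAddCommGroup X] : ℝ :=
  sSup {d : ℝ | ∃ S : Set X, S ⊆ Metric.closedBall 0 1 ∧ S.Infinite ∧
    ∀ x ∈ S, ∀ y ∈ S, x ≠ y → d ≤ ‖x - y‖}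
open scoped ENNReal

/-!
A `(1,1,d)`-b.s.a. set is `d`-separated in the unit ball, so `K_a(X) ≤ 2` always, and
`K_a(ℓᵖ) ≤ K(ℓᵖ) = 2^{1/p}`. For the latter (Kottman's bound) pass to a coordinatewise
convergent subsequence with limit `L ∈ ℓᵖ`; a gliding hump then finds `n ≠ m` such that
`y n - y m` is, up to `ε`, the disjointly supported vector `P_{[N,M)} (y n) - P_{[M,∞)} (y m)`,
whose norm is at most `(‖y n‖ᵖ + ‖y m‖ᵖ)^{1/p} ≤ 2^{1/p}`.

The lower bounds are explicit. In `ℓᵖ` the unit vectors `e i`, `e j` are separated by the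
functional `2^{1/p-1} (e_j^* - e_i^*)`, which has norm `1` by the power mean inequality. In `c₀`
the vectors `x j = 1_{[0,j)} - e j` are separated by `±` the coordinate functional at `min i j`.
-/

open Topology

theorem ENNReal.one_le_toReal {p : ℝ≥0∞} (h1 : 1 ≤ p) (hp : p ≠ ∞) :
    1 ≤ p.toReal := by
  simpa using ENNReal.toReal_mono hp h1

section BSA

variable {X : Type*} [NormedAddCommGroup X] [NormedSpace ℝ X] {S : Set X} {c d : ℝ}

theorem IsBSA.le_norm_sub (h : IsBSA X S 1 1 d) {x y : X} (hx : x ∈ S) (hy : y ∈ S)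
    (hxy : x ≠ y) : d ≤ ‖x - y‖ := by
  obtain ⟨f, hf, hd, -⟩ := h.2 x hx y hy hxy
  calc d ≤ f y - f x := hd
    _ = f (y - x) := (map_sub f y x).symm
    _ ≤ ‖f‖ * ‖y - x‖ := (le_abs_self _).trans (f.le_opNorm _)
    _ ≤ ‖x - y‖ := by rw [norm_sub_rev]; exact mul_le_of_le_one_left (norm_nonneg _) hf

theorem IsBSA.le_two (h : IsBSA X S 1 1 d) (hS : S.Nontrivial) : d ≤ 2 := by
  obtain ⟨x, hx, y, hy, hxy⟩ := hS
  calc d ≤ ‖x - y‖ := h.le_norm_sub hx hy hxy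
    _ ≤ 1 + 1 := norm_sub_le_of_le (h.1 x hx) (h.1 y hy)
    _ = 2 := one_add_one_eq_two

theorem Ka_eq_of_isBSA (hex : ∃ S : Set X, S.Infinite ∧ IsBSA X S 1 1 c)
    (hle : ∀ d (T : Set X), T.Infinite → IsBSA X T 1 1 d → d ≤ c) : Ka X = c := by
  have hub : c ∈ upperBounds {d | ∃ T : Set X, T.Infinite ∧ IsBSA X T 1 1 d} :=
    fun d ⟨T, hT, hTd⟩ => hle d T hT hTd
  exact le_antisymm (csSup_le ⟨c, hex⟩ hub) (le_csSup ⟨c, hub⟩ hex)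

theorem exists_infinite_isBSA_of_forall_ne {ι : Type*} [Infinite ι] {x : ι → X}
    (hx : ∀ i, ‖x i‖ ≤ 1) (hc : 0 < c)
    (hf : ∀ i j, i ≠ j → ∃ f : X →L[ℝ] ℝ,
      ‖f‖ ≤ 1 ∧ f (x i) = -c ∧ f (x j) = c ∧ ∀ k, |f (x k)| ≤ c) :
    ∃ S : Set X, S.Infinite ∧ IsBSA X S 1 1 (2 * c) := by
  have hinj : Function.Injective x := fun i j hxij => by_contra fun hij => by
    obtain ⟨f, -, hfi, hfj, -⟩ := hf i j hij
    rw [hxij] at hfi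
    linarith
  refine ⟨range x, infinite_range_of_injective hinj, forall_mem_range.2 hx, ?_⟩
  rintro _ ⟨i, rfl⟩ _ ⟨j, rfl⟩ hij
  obtain ⟨f, hf1, hfi, hfj, hfk⟩ := hf i j (ne_of_apply_ne x hij)
  refine ⟨f, hf1, by rw [hfi, hfj]; linarith, ?_⟩
  rintro _ ⟨k, rfl⟩
  rw [hfi, hfj]
  exact abs_le.1 (hfk k)

end BSA

namespace lp

variable {α : Type*} {p : ℝ≥0∞}

section LowerBound

theorem abs_apply_sub_apply_le (hp : 1 ≤ p.toReal) (f : lp (fun _ : α => ℝ) p) {i j : α}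
    (hij : i ≠ j) : |f j - f i| ≤ 2 ^ (1 - 1 / p.toReal) * ‖f‖ := by
  classical
  set q := p.toReal
  have hq : 0 < q := zero_lt_one.trans_le hp
  have hpow : (∑ k ∈ {i, j}, |f k|) ^ q ≤ (2 ^ (1 - 1 / q) * ‖f‖) ^ q := calc
    _ ≤ (({i, j} : Finset α).card : ℝ) ^ (q - 1) * ∑ k ∈ {i, j}, |f k| ^ q :=
        Real.rpow_sum_le_const_mul_sum_rpow _ _ hp
    _ ≤ 2 ^ (q - 1) * ‖f‖ ^ q := by
        rw [Finset.card_pair hij, Nat.cast_two]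
        gcongr
        simpa only [Real.norm_eq_abs] using lp.sum_rpow_le_norm_rpow hq f {i, j}
    _ = (2 ^ (1 - 1 / q) * ‖f‖) ^ q := by
        rw [Real.mul_rpow (by positivity) (lp.norm_nonneg' f), ← Real.rpow_mul zero_le_two]
        congr 2
        field_simp
  calc |f j - f i| ≤ ∑ k ∈ {i, j}, |f k| := by
        rw [Finset.sum_pair hij, add_comm]
        exact abs_sub _ _
    _ ≤ 2 ^ (1 - 1 / q) * ‖f‖ :=
        (Real.rpow_le_rpow_iff (Finset.sum_nonneg fun _ _ => abs_nonneg _)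
          (mul_nonneg (by positivity) (lp.norm_nonneg' f)) hq).1 hpow

variable [Fact (1 ≤ p)]

theorem norm_smul_evalCLM_sub_evalCLM_le (hp : p ≠ ∞) {i j : α} (hij : i ≠ j) :
    ‖(2 : ℝ) ^ (1 / p.toReal - 1) •
      (evalCLM ℝ (fun _ : α => ℝ) p j - evalCLM ℝ (fun _ : α => ℝ) p i)‖ ≤ 1 := by
  refine ContinuousLinearMap.opNorm_le_bound _ zero_le_one fun f => ?_
  have h2 : (2 : ℝ) ^ (1 / p.toReal - 1) * 2 ^ (1 - 1 / p.toReal) = 1 := by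
    rw [← Real.rpow_add two_pos]; simp
  calc ‖(2 : ℝ) ^ (1 / p.toReal - 1) * (f j - f i)‖
        = 2 ^ (1 / p.toReal - 1) * |f j - f i| := by
          rw [norm_mul, Real.norm_of_nonneg (by positivity), Real.norm_eq_abs]
    _ ≤ 2 ^ (1 / p.toReal - 1) * (2 ^ (1 - 1 / p.toReal) * ‖f‖) := by
          gcongr; exact abs_apply_sub_apply_le (ENNReal.one_le_toReal Fact.out hp) f hij
    _ = 1 * ‖f‖ := by rw [← mul_assoc, h2]

theorem exists_infinite_isBSA [Infinite α] (hp : p ≠ ∞) :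
    ∃ S : Set (lp (fun _ : α => ℝ) p), S.Infinite ∧ IsBSA _ S 1 1 (2 ^ (1 / p.toReal)) := by
  classical
  have h2 : (2 : ℝ) ^ (1 / p.toReal) = 2 * 2 ^ (1 / p.toReal - 1) := by
    rw [Real.rpow_sub two_pos, Real.rpow_one]; ring
  rw [h2]
  refine exists_infinite_isBSA_of_forall_ne (x := fun i => lp.single p i (1 : ℝ))
    (fun i => by simp [lp.norm_single (zero_lt_one.trans_le Fact.out)]) (by positivity)
    fun i j hij => ⟨_, norm_smul_evalCLM_sub_evalCLM_le hp hij, ?_, ?_, fun k => ?_⟩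
  all_goals simp [evalCLM, lp.single_apply, Pi.single_apply, hij, hij.symm]
  rw [abs_of_pos (by positivity)]
  exact mul_le_of_le_one_right (by positivity) (by split_ifs <;> norm_num)

end LowerBound

section Truncate

variable {E : α → Type*} [∀ i, NormedAddCommGroup (E i)]

theorem norm_rpow_le_add_of_forall_le_or_le (hp : 0 < p.toReal) {f g h : lp E p}
    (hfg : ∀ i, ‖h i‖ ≤ ‖f i‖ ∨ ‖h i‖ ≤ ‖g i‖) :
    ‖h‖ ^ p.toReal ≤ ‖f‖ ^ p.toReal + ‖g‖ ^ p.toReal := by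
  have hs (u : lp E p) := (lp.memℓp u).summable hp
  rw [lp.norm_rpow_eq_tsum hp, lp.norm_rpow_eq_tsum hp, lp.norm_rpow_eq_tsum hp,
    ← (hs f).tsum_add (hs g)]
  refine (hs h).tsum_le_tsum (fun i => ?_) ((hs f).add (hs g))
  have hf := Real.rpow_nonneg (norm_nonneg (f i)) p.toReal
  have hg := Real.rpow_nonneg (norm_nonneg (g i)) p.toReal
  rcases hfg i with hi | hi
  · linarith [Real.rpow_le_rpow (norm_nonneg _) hi hp.le]
  · linarith [Real.rpow_le_rpow (norm_nonneg _) hi hp.le]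

variable [DecidableEq α]

def truncate (s : Finset α) (f : lp E p) : lp E p :=
  ∑ i ∈ s, lp.single p i (f i)

theorem truncate_apply (s : Finset α) (f : lp E p) (i : α) :
    truncate s f i = if i ∈ s then f i else 0 := by
  simp only [truncate, lp.coeFn_single, coeFn_sum, Finset.sum_apply, Finset.sum_pi_single]

theorem tendsto_truncate_of_tendsto_pi [Fact (1 ≤ p)] {ι : Type*} {l : Filter ι}
    {F : ι → lp E p} {f : lp E p} (hF : Tendsto (fun n => ⇑(F n)) l (𝓝 ⇑f))
    (s : Finset α) :
    Tendsto (fun n => truncate s (F n)) l (𝓝 (truncate s f)) :=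
  tendsto_finsetSum s fun i _ =>
    ((isometry_single i).continuous.tendsto _).comp (((continuous_apply i).tendsto _).comp hF)

theorem norm_truncate_sub_sub_truncate_rpow_le (hp : 0 < p.toReal) {s t : Finset α}
    (hst : s ⊆ t) (f g : lp E p) :
    ‖(truncate t f - truncate s f) - (g - truncate t g)‖ ^ p.toReal
      ≤ ‖f‖ ^ p.toReal + ‖g‖ ^ p.toReal := by
  refine norm_rpow_le_add_of_forall_le_or_le hp fun i => ?_
  simp only [lp.coeFn_sub, Pi.sub_apply, truncate_apply]
  by_cases hit : i ∈ t
  · by_cases his : i ∈ s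
    · simp [his, hst his]
    · simp [hit, his]
  · have his : i ∉ s := fun h => hit (hst h)
    simp [hit, his]

end Truncate

section UpperBound

variable [Fact (1 ≤ p)]

theorem exists_strictMono_tendsto_pi [Countable α] {E : α → Type*}
    [∀ i, NormedAddCommGroup (E i)] [∀ i, ProperSpace (E i)] {y : ℕ → lp E p}
    (hy : ∀ n, ‖y n‖ ≤ 1) :
    ∃ (L : lp E p) (φ : ℕ → ℕ),
      StrictMono φ ∧ Tendsto (fun n => ⇑(y (φ n))) atTop (𝓝 ⇑L) := by
  have hp : p ≠ 0 := (zero_lt_one.trans_le Fact.out).ne'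
  obtain ⟨a, -, φ, hφ, ha⟩ :=
    (isCompact_univ_pi fun i => isCompact_closedBall (0 : E i) 1).tendsto_subseq
      (x := fun n => ⇑(y n)) fun n i _ =>
        mem_closedBall_zero_iff.2 ((norm_apply_le_norm hp _ i).trans (hy n))
  have hbdd : Bornology.IsBounded (range (y ∘ φ)) :=
    isBounded_iff_forall_norm_le.2 ⟨1, forall_mem_range.2 fun n => hy _⟩
  exact ⟨⟨a, memℓp_of_tendsto hbdd ha⟩, φ, hφ, ha⟩

variable {E : ℕ → Type*} [∀ i, NormedAddCommGroup (E i)]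

theorem tendsto_truncate_range (hp : p ≠ ∞) (f : lp E p) :
    Tendsto (fun N => truncate (.range N) f) atTop (𝓝 f) :=
  (lp.hasSum_single hp f).tendsto_sum_nat

theorem exists_ne_norm_sub_le_of_tendsto_pi (hp : p ≠ ∞) {y : ℕ → lp E p}
    (hy : ∀ n, ‖y n‖ ≤ 1) {L : lp E p} (hL : Tendsto (fun n => ⇑(y n)) atTop (𝓝 ⇑L))
    {ε : ℝ} (hε : 0 < ε) :
    ∃ n m, n ≠ m ∧ ‖y n - y m‖ ≤ 2 ^ (1 / p.toReal) + ε := by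
  have hq : 0 < p.toReal := zero_lt_one.trans_le (ENNReal.one_le_toReal Fact.out hp)
  have hδ : 0 < ε / 5 := by positivity
  obtain ⟨N, hN⟩ : ∃ N, ∀ K ≥ N, ‖truncate (.range K) L - L‖ < ε / 5 :=
    eventually_atTop.1 ((tendsto_truncate_range hp L).eventually (eventually_norm_sub_lt _ hδ))
  obtain ⟨n, hn⟩ : ∃ n, ‖truncate (.range N) (y n) - truncate (.range N) L‖ < ε / 5 :=
    ((tendsto_truncate_of_tendsto_pi hL _).eventually (eventually_norm_sub_lt _ hδ)).exists
  obtain ⟨M, hNM, hM⟩ : ∃ M, N ≤ M ∧ ‖truncate (.range M) (y n) - y n‖ < ε / 5 :=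
    ((eventually_ge_atTop N).and
      ((tendsto_truncate_range hp (y n)).eventually (eventually_norm_sub_lt _ hδ))).exists
  obtain ⟨m, hnm, hm⟩ :
      ∃ m, n < m ∧ ‖truncate (.range M) (y m) - truncate (.range M) L‖ < ε / 5 :=
    ((eventually_gt_atTop n).and
      ((tendsto_truncate_of_tendsto_pi hL _).eventually (eventually_norm_sub_lt _ hδ))).exists
  have hmain : ‖(truncate (.range M) (y n) - truncate (.range N) (y n))
      - (y m - truncate (.range M) (y m))‖ ≤ 2 ^ (1 / p.toReal) := by
    rw [one_div, Real.le_rpow_inv_iff_of_pos (norm_nonneg _) zero_le_two hq]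
    calc _ ≤ ‖y n‖ ^ p.toReal + ‖y m‖ ^ p.toReal :=
          norm_truncate_sub_sub_truncate_rpow_le hq (Finset.range_subset_range.2 hNM) _ _
      _ ≤ 1 + 1 := add_le_add (Real.rpow_le_one (norm_nonneg _) (hy n) hq.le)
          (Real.rpow_le_one (norm_nonneg _) (hy m) hq.le)
      _ = 2 := one_add_one_eq_two
  -- Below `N` both `y n` and `y m` are close to `L`, between `N` and `M` the vectors `L` and
  -- `y m` are small, and beyond `M` the vector `y n` is small.
  have hsplit : y n - y m = (truncate (.range M) (y n) - truncate (.range N) (y n))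
      - (y m - truncate (.range M) (y m))
      + (truncate (.range N) (y n) - truncate (.range N) L)
      - (truncate (.range M) (y m) - truncate (.range M) L)
      - (truncate (.range M) (y n) - y n)
      + ((truncate (.range N) L - L) - (truncate (.range M) L - L)) := by abel
  refine ⟨n, m, hnm.ne, ?_⟩
  calc ‖y n - y m‖ ≤ 2 ^ (1 / p.toReal) + ε / 5 + ε / 5 + ε / 5 + (ε / 5 + ε / 5) := by
        rw [hsplit]
        exact norm_add_le_of_le (norm_sub_le_of_le (norm_sub_le_of_le
          (norm_add_le_of_le hmain hn.le) hm.le) hM.le)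
          (norm_sub_le_of_le (hN N le_rfl).le (hN M hNM).le)
    _ = 2 ^ (1 / p.toReal) + ε := by ring

theorem le_two_rpow_of_le_norm_sub [∀ i, ProperSpace (E i)] (hp : p ≠ ∞)
    {S : Set (lp E p)} (hS : S.Infinite) (hS1 : ∀ x ∈ S, ‖x‖ ≤ 1) {d : ℝ}
    (hd : ∀ x ∈ S, ∀ y ∈ S, x ≠ y → d ≤ ‖x - y‖) : d ≤ 2 ^ (1 / p.toReal) := by
  set e := hS.natEmbedding
  obtain ⟨L, φ, hφ, hL⟩ := exists_strictMono_tendsto_pi (y := fun n => (e n : lp E p))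
    fun n => hS1 _ (e n).2
  refine le_of_forall_pos_le_add fun ε hε => ?_
  obtain ⟨n, m, hnm, hle⟩ := exists_ne_norm_sub_le_of_tendsto_pi hp
    (y := fun n => (e (φ n) : lp E p)) (fun n => hS1 _ (e _).2) hL hε
  exact (hd _ (e _).2 _ (e _).2 fun h =>
    hnm (hφ.injective (e.injective (Subtype.ext h)))).trans hle

end UpperBound

end lp

theorem Ka_lp_eq_two_rpow {p : ℝ≥0∞} [Fact (1 ≤ p)] (hp : p ≠ ∞) :
    Ka (lp (fun _ : ℕ => ℝ) p) = 2 ^ (1 / p.toReal) :=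
  Ka_eq_of_isBSA (lp.exists_infinite_isBSA hp) fun _ _ hT hTd =>
    lp.le_two_rpow_of_le_norm_sub hp hT hTd.1 fun _ hx _ hy hxy => hTd.le_norm_sub hx hy hxy

namespace ZeroAtInftyContinuousMap

open scoped ZeroAtInfty

variable {α : Type*} [TopologicalSpace α]

def evalCLM (x : α) : C₀(α, ℝ) →L[ℝ] ℝ :=
  LinearMap.mkContinuous
    { toFun := fun f => f x, map_add' := fun _ _ => rfl, map_smul' := fun _ _ => rfl } 1
    fun f => by
      rw [one_mul, ← norm_toBCF_eq_norm]
      exact f.toBCF.norm_coe_le_norm x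

theorem evalCLM_apply (x : α) (f : C₀(α, ℝ)) :
    evalCLM x f = f x := rfl

theorem norm_evalCLM_le (x : α) : ‖evalCLM x‖ ≤ 1 :=
  LinearMap.mkContinuous_norm_le _ zero_le_one _

def staircase (j : ℕ) : C₀(ℕ, ℝ) where
  toFun k := if k < j then 1 else if k = j then -1 else 0
  continuous_toFun := continuous_of_discreteTopology
  zero_at_infty' := by
    rw [cocompact_eq_atTop]
    refine tendsto_const_nhds.congr' ?_
    filter_upwards [eventually_gt_atTop j] with k hk
    simp [hk.not_gt, hk.ne']

theorem staircase_apply (j k : ℕ) :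
    staircase j k = if k < j then 1 else if k = j then -1 else 0 := rfl

theorem abs_staircase_apply_le (j k : ℕ) : |staircase j k| ≤ 1 := by
  rw [staircase_apply]
  split_ifs <;> norm_num

theorem norm_staircase_le (j : ℕ) : ‖staircase j‖ ≤ 1 := by
  rw [← norm_toBCF_eq_norm, BoundedContinuousFunction.norm_le zero_le_one]
  exact abs_staircase_apply_le j

theorem exists_infinite_isBSA_two :
    ∃ S : Set C₀(ℕ, ℝ), S.Infinite ∧ IsBSA _ S 1 1 2 := by
  rw [← mul_one (2 : ℝ)]
  refine exists_infinite_isBSA_of_forall_ne norm_staircase_le one_pos fun i j hij => ?_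
  rcases hij.lt_or_gt with hij | hji
  · exact ⟨evalCLM i, norm_evalCLM_le i, by simp [evalCLM_apply, staircase_apply],
      by simp [evalCLM_apply, staircase_apply, hij], fun k => abs_staircase_apply_le k i⟩
  · refine ⟨-evalCLM j, by rw [norm_neg]; exact norm_evalCLM_le j, ?_, ?_, fun k => ?_⟩
    · simp [evalCLM_apply, staircase_apply, hji]
    · simp [evalCLM_apply, staircase_apply]
    · simpa [evalCLM_apply] using abs_staircase_apply_le k j

end ZeroAtInftyContinuousMap

theorem Ka_zeroAtInfty_eq_two : Ka (ZeroAtInftyContinuousMap ℕ ℝ) = 2 :=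
  Ka_eq_of_isBSA ZeroAtInftyContinuousMap.exists_infinite_isBSA_two fun _ _ hT hTd =>
    hTd.le_two hT.nontrivial

/-- K_a(ℓᵖ) = 2^{1/p} for 1 < p < ∞, and K_a(c₀) = K_a(ℓ¹) = 2. -/
theorem stmt16 :
    (∀ (p : ℝ≥0∞) [Fact (1 ≤ p)], 1 < p → p ≠ ∞ →
      Ka (lp (fun _ : ℕ => ℝ) p) = 2 ^ (1 / p.toReal)) ∧
    Ka (ZeroAtInftyContinuousMap ℕ ℝ) = 2 ∧
    Ka (lp (fun _ : ℕ => ℝ) 1) = 2 := by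
  refine ⟨fun p _ _ hp => Ka_lp_eq_two_rpow hp, Ka_zeroAtInfty_eq_two, ?_⟩
  simpa using Ka_lp_eq_two_rpow (p := 1) ENNReal.one_ne_top
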